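/- Suppose ψ : [0,∞) → ℝ satisfies ψ(1) = 1 and ψ(r) = 1 if and only if r = 1. Then the only double points of the Whitney map w(s,y) = ((1−λ(s,y))s, y, −λ(s,y), λ(s,y)sy), with λ(s,y) = ψ(s²+‖y‖²), are at (1,0) and (−1,0): if w(s,y) = w(s',y') with (s,y) ≠ (s',y'), then y = y' = 0 and {s,s'} = {1,−1}; moreover w(1,0) = w(−1,0) = (0,0,−1,0). -/
import Mathlib


/-- If ψ(1) = 1 and ψ(r) = 1 exactly when r = 1, then the only double
points of Whitney's map w are (1,0) and (−1,0): if w(s,y) = w(s',y') with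
(s,y) ≠ (s',y') then y = y' = 0 and {s,s'} = {1,−1}; and w(1,0) = w(−1,0) = (0,0,−1,0). -/
theorem stmt_10 {U : Type*} [NormedAddCommGroup U] [InnerProductSpace ℝ U]
    (ψ : ℝ → ℝ) (hψ1 : ψ 1 = 1) (hψ : ∀ r : ℝ, 0 ≤ r → (ψ r = 1 ↔ r = 1))
    (lam : ℝ × U → ℝ) (hlam : ∀ s y, lam (s, y) = ψ (s ^ 2 + ‖y‖ ^ 2))
    (w : ℝ × U → (ℝ × U) × (ℝ × U))
    (hw : ∀ s y, w (s, y) =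
      (((1 - lam (s, y)) * s, y), (-lam (s, y), lam (s, y) • s • y))) :
    (∀ s s' : ℝ, ∀ y y' : U, w (s, y) = w (s', y') → (s, y) ≠ (s', y') →
        y = 0 ∧ y' = 0 ∧ ((s = 1 ∧ s' = -1) ∨ (s = -1 ∧ s' = 1))) ∧
    w (1, 0) = ((0, 0), (-1, 0)) ∧ w (-1, 0) = ((0, 0), (-1, 0)) := by
  have hnn : ∀ (s : ℝ) (y : U), (0:ℝ) ≤ s ^ 2 + ‖y‖ ^ 2 := fun s y =>
    add_nonneg (sq_nonneg s) (sq_nonneg _)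
  refine ⟨?_, ?_, ?_⟩
  · intro s s' y y' heq hne
    rw [hw s y, hw s' y', Prod.mk.injEq, Prod.mk.injEq, Prod.mk.injEq] at heq
    obtain ⟨⟨e1, e2⟩, e3, e4⟩ := heq
    subst e2
    have hL : lam (s, y) = lam (s', y) := by linarith
    have hsne : s ≠ s' := fun h => hne (by rw [h])
    have hL1 : lam (s, y) = 1 := by
      by_contra h
      rw [← hL] at e1
      exact hsne (mul_left_cancel₀ (sub_ne_zero.2 fun h' => h h'.symm) e1)
    have hsum : s ^ 2 + ‖y‖ ^ 2 = 1 := by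
      rw [← hψ _ (hnn s y), ← hlam s y]; exact hL1
    have hsum' : s' ^ 2 + ‖y‖ ^ 2 = 1 := by
      rw [← hψ _ (hnn s' y), ← hlam s' y]; exact hL1 ▸ hL.symm
    have hy0 : y = 0 := by
      have : (s - s') • y = 0 := by
        rw [hL1, ← hL, hL1] at e4
        simp only [one_smul] at e4
        rw [sub_smul, e4, sub_self]
      rcases smul_eq_zero.1 this with h | h
      · exact absurd (sub_eq_zero.1 h) hsne
      · exact h
    subst hy0
    refine ⟨rfl, rfl, ?_⟩
    simp only [norm_zero, zero_pow, add_zero] at hsum hsum'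
    have hs : s = 1 ∨ s = -1 := by
      rcases mul_eq_zero.1 (show (s - 1) * (s + 1) = 0 by nlinarith) with h | h
      · left; linarith
      · right; linarith
    have hs' : s' = 1 ∨ s' = -1 := by
      rcases mul_eq_zero.1 (show (s' - 1) * (s' + 1) = 0 by nlinarith) with h | h
      · left; linarith
      · right; linarith
    rcases hs with h | h <;> rcases hs' with h' | h' <;>
      first
        | exact absurd (h.trans h'.symm) hsne
        | exact Or.inl ⟨h, h'⟩
        | exact Or.inr ⟨h, h'⟩
  · have : lam ((1:ℝ), (0:U)) = 1 := by
      rw [hlam]; simp [hψ1]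
    rw [hw]; simp [this]
  · have : lam ((-1:ℝ), (0:U)) = 1 := by
      rw [hlam]; simp [hψ1]
    rw [hw]; simp [this]
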